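/- arXiv:2507.16825 — 4 statements merged into one kernel-verified Lean document; each statement's English description precedes it below -/
import Mathlib

section
/- Let p be an odd prime and α a positive integer. Then ∑_{k=1}^{α} (-1)^k/k ≡ ((-1)^α / 2) · (E_{p-2}(α+1) + (-1)^α E_{p-2}(0)) (mod p), where the left side is interpreted in the field of p elements (each k is invertible mod p when α < p, and terms are taken mod p via Fermat's little theorem). -/
open Finset Polynomial

noncomputable section

/-- The `m`-th Euler polynomial `E_m(x)`, defined by the generating function
`2e^{xt}/(e^t+1) = ∑_{m≥0} E_m(x) t^m/m!`, here realized via the classical identity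
`E_m(x) = (2^{m+1}/(m+1)) (B_{m+1}((x+1)/2) - B_{m+1}(x/2))` in terms of Bernoulli
polynomials. -/
def eulerPoly (m : ℕ) : Polynomial ℚ :=
  ((2 : ℚ) ^ (m + 1) / (m + 1 : ℚ)) •
    ((Polynomial.bernoulli (m + 1)).comp (Polynomial.C (1/2 : ℚ) * Polynomial.X + Polynomial.C (1/2 : ℚ))
      - (Polynomial.bernoulli (m + 1)).comp (Polynomial.C (1/2 : ℚ) * Polynomial.X))

/-- The basic difference equation `E_m(x+1) + E_m(x) = 2 x^m`. -/
lemma euler_eval_succ (m : ℕ) (x : ℚ) :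
    (eulerPoly m).eval (x + 1) + (eulerPoly m).eval x = 2 * x ^ m := by
  have hm : ((m:ℚ) + 1) ≠ 0 := by positivity
  have h2m : (2:ℚ) ^ m ≠ 0 := by positivity
  have key : (Polynomial.bernoulli (m+1)).eval (1 + 1/2 * x)
      = (Polynomial.bernoulli (m+1)).eval (1/2 * x) + ((m:ℚ)+1) * x ^ m / 2 ^ m := by
    have h := Polynomial.bernoulli_eval_one_add (m+1) (1/2 * x)
    rw [Nat.add_sub_cancel] at h
    rw [h, mul_pow, div_pow, one_pow]
    push_cast
    ring
  simp only [eulerPoly, eval_smul, smul_eq_mul, eval_sub, eval_comp, eval_add, eval_mul,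
    eval_C, eval_X]
  rw [show (1/2:ℚ) * (x + 1) + 1/2 = 1 + 1/2 * x by ring,
    show (1/2:ℚ) * (x + 1) = 1/2 * x + 1/2 by ring, key]
  field_simp
  ring

/-- Alternating power sums in terms of Euler polynomial values. -/
lemma euler_sum_eq (m : ℕ) (hm : 1 ≤ m) (α : ℕ) :
    2 * ∑ k ∈ Finset.Icc 1 α, (-1:ℚ)^k * (k:ℚ)^m
      = (-1:ℚ)^α * (eulerPoly m).eval ((α:ℚ)+1) + (eulerPoly m).eval 0 := by
  induction α with
  | zero =>
    have h0 := euler_eval_succ m 0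
    rw [zero_add, zero_pow (by omega : m ≠ 0), mul_zero] at h0
    simp only [Finset.Icc_eq_empty (by omega : ¬ (1:ℕ) ≤ 0), Finset.sum_empty, mul_zero,
      Nat.cast_zero, pow_zero, one_mul, zero_add]
    linarith [h0]
  | succ n ih =>
    rw [Finset.sum_Icc_succ_top (by omega : 1 ≤ n + 1)]
    have h := euler_eval_succ m ((n:ℚ)+1)
    push_cast
    push_cast at ih
    linear_combination ih + (-1:ℚ)^n * h

/-- `q` is `p`-integral: there is b with `p ∤ b` and `q * b ∈ ℤ`. -/
def PI (p : ℕ) (q : ℚ) : Prop := ∃ a b : ℤ, ¬ (p:ℤ) ∣ b ∧ q * (b:ℚ) = (a:ℚ)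

namespace PI

variable {p : ℕ}

lemma intCast (hp : p.Prime) (z : ℤ) : PI p (z:ℚ) := by
  refine ⟨z, 1, ?_, by norm_num⟩
  intro h
  have h1 := Int.le_of_dvd one_pos h
  have := hp.two_le
  omega

lemma mul (hp : p.Prime) {q r : ℚ} (h1 : PI p q) (h2 : PI p r) : PI p (q * r) := by
  obtain ⟨a1, b1, hb1, e1⟩ := h1
  obtain ⟨a2, b2, hb2, e2⟩ := h2
  have hpz : Prime (p:ℤ) := Nat.prime_iff_prime_int.mp hp
  refine ⟨a1 * a2, b1 * b2, ?_, ?_⟩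
  · intro h
    rcases hpz.dvd_mul.mp h with h | h
    exacts [hb1 h, hb2 h]
  · push_cast
    linear_combination r * (b2:ℚ) * e1 + (a1:ℚ) * e2

lemma add (hp : p.Prime) {q r : ℚ} (h1 : PI p q) (h2 : PI p r) : PI p (q + r) := by
  obtain ⟨a1, b1, hb1, e1⟩ := h1
  obtain ⟨a2, b2, hb2, e2⟩ := h2
  have hpz : Prime (p:ℤ) := Nat.prime_iff_prime_int.mp hp
  refine ⟨a1 * b2 + a2 * b1, b1 * b2, ?_, ?_⟩
  · intro h
    rcases hpz.dvd_mul.mp h with h | h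
    exacts [hb1 h, hb2 h]
  · push_cast
    linear_combination (b2:ℚ) * e1 + (b1:ℚ) * e2

lemma zero (hp : p.Prime) : PI p 0 := by simpa using intCast hp 0

lemma sum (hp : p.Prime) {ι : Type*} (s : Finset ι) (f : ι → ℚ)
    (h : ∀ i ∈ s, PI p (f i)) : PI p (∑ i ∈ s, f i) := by
  classical
  induction s using Finset.induction_on with
  | empty => simpa using zero hp
  | insert _ _ hnot ih =>
    rw [Finset.sum_insert hnot]
    exact add hp (h _ (Finset.mem_insert_self _ _))
      (ih fun i hi => h i (Finset.mem_insert_of_mem hi))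

lemma div_int (hp : p.Prime) (a b : ℤ) (hb : ¬ (p:ℤ) ∣ b) : PI p ((a:ℚ)/(b:ℚ)) := by
  have hb0 : b ≠ 0 := by rintro rfl; exact hb (dvd_zero _)
  have hbQ : (b:ℚ) ≠ 0 := Int.cast_ne_zero.mpr hb0
  exact ⟨a, b, hb, by field_simp⟩

lemma pow (hp : p.Prime) {q : ℚ} (h : PI p q) (k : ℕ) : PI p (q ^ k) := by
  induction k with
  | zero => simpa using intCast hp 1
  | succ n ih => rw [pow_succ]; exact mul hp ih h

end PI

lemma PI_bernoulli {p : ℕ} (hp : p.Prime) : ∀ i, i + 1 < p → PI p (_root_.bernoulli i) := by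
  intro i
  induction i using Nat.strong_induction_on with
  | _ i IH =>
    intro hi
    rcases Nat.eq_zero_or_pos i with rfl | hpos
    · simpa using PI.intCast hp 1
    · have hs := _root_.sum_bernoulli (i+1)
      rw [if_neg (by omega), Finset.sum_range_succ, Nat.choose_succ_self_right] at hs
      have hne : ((i:ℚ)+1) ≠ 0 := by positivity
      push_cast at hs
      have hBi : _root_.bernoulli i
          = ((-1 : ℤ):ℚ)/(((i:ℤ)+1 :ℤ):ℚ)
            * ∑ k ∈ Finset.range i, ((i+1).choose k : ℚ) * _root_.bernoulli k := by
        push_cast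
        field_simp
        linear_combination hs
      rw [hBi]
      refine PI.mul hp (PI.div_int hp (-1) ((i:ℤ)+1) ?_) (PI.sum hp _ _ ?_)
      · intro h
        have h' : p ∣ i + 1 := by exact_mod_cast h
        have := Nat.le_of_dvd (by omega) h'
        omega
      · intro k hk
        rw [Finset.mem_range] at hk
        refine PI.mul hp ?_ (IH k hk (by omega))
        simpa using PI.intCast hp ((i+1).choose k : ℤ)

lemma PI_euler_zero {p : ℕ} (hp : p.Prime) (hp2 : p ≠ 2) (m : ℕ) (hm : m + 1 < p) :
    PI p ((eulerPoly m).eval 0) := by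
  have h12 : (Polynomial.bernoulli (m+1)).eval (1/2:ℚ)
      = ∑ i ∈ Finset.range (m+2), _root_.bernoulli i * ((m+1).choose i) * (1/2:ℚ)^(m+1-i) := by
    rw [Polynomial.bernoulli, eval_finset_sum]
    exact Finset.sum_congr rfl fun i _ => by rw [eval_monomial]
  have heval : (eulerPoly m).eval 0
      = ((2:ℚ)^(m+1)/((m:ℚ)+1))
        * ∑ i ∈ Finset.range (m+1), _root_.bernoulli i * ((m+1).choose i) * (1/2:ℚ)^(m+1-i) := by
    simp only [eulerPoly, eval_smul, smul_eq_mul, eval_sub, eval_comp, eval_add, eval_mul,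
      eval_C, eval_X, mul_zero, zero_add]
    rw [h12, Polynomial.bernoulli_eval_zero, Finset.sum_range_succ]
    simp only [Nat.sub_self, pow_zero, Nat.choose_self, Nat.cast_one, mul_one]
    ring
  rw [heval]
  have hpodd : ¬ (p:ℤ) ∣ 2 := by
    intro h
    have h' : p ∣ 2 := by exact_mod_cast h
    have := Nat.le_of_dvd (by norm_num) h'
    have := hp.two_le
    omega
  refine PI.mul hp ?_ (PI.sum hp _ _ ?_)
  · have := PI.div_int hp (2^(m+1)) ((m:ℤ)+1) ?_
    · push_cast at this
      simpa using this
    · intro h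
      have h' : p ∣ m + 1 := by exact_mod_cast h
      have := Nat.le_of_dvd (by omega) h'
      omega
  · intro i hi
    rw [Finset.mem_range] at hi
    refine PI.mul hp (PI.mul hp (PI_bernoulli hp i (by omega)) ?_) ?_
    · simpa using PI.intCast hp ((m+1).choose i : ℤ)
    · refine PI.pow hp ?_ _
      have := PI.div_int hp 1 2 hpodd
      simpa using this

lemma ratCast_eq_div (p : ℕ) [Fact p.Prime] (q : ℚ) (a b : ℤ)
    (hb : ((b : ℤ) : ZMod p) ≠ 0) (h : q * (b:ℚ) = (a:ℚ)) :
    (q : ZMod p) = (a : ZMod p) / (b : ZMod p) := by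
  have hb0 : b ≠ 0 := by rintro rfl; simp at hb
  have hbQ : (b:ℚ) ≠ 0 := Int.cast_ne_zero.mpr hb0
  have hq : q = (a:ℚ)/(b:ℚ) := (eq_div_iff hbQ).mpr h
  have hdvd : (q.den : ℤ) ∣ b := by
    rw [hq, ← Rat.divInt_eq_div]
    exact Rat.den_dvd a b
  have hden : ((q.den : ℤ) : ZMod p) ≠ 0 := by
    intro h0
    rw [ZMod.intCast_zmod_eq_zero_iff_dvd] at h0
    exact hb (by rw [ZMod.intCast_zmod_eq_zero_iff_dvd]; exact h0.trans hdvd)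
  have hdQ : ((q.den : ℕ):ℚ) ≠ 0 := Nat.cast_ne_zero.mpr q.den_nz
  have hnum : (q.num : ℚ) * (b:ℚ) = (a:ℚ) * ((q.den:ℕ):ℚ) := by
    have h3 : (q.num:ℚ)/((q.den:ℕ):ℚ) = q := q.num_div_den
    rw [← h3] at h
    field_simp at h
    linear_combination h
  have hZ : q.num * b = a * (q.den : ℤ) := by exact_mod_cast hnum
  have hZmod : (q.num : ZMod p) * (b : ZMod p) = (a : ZMod p) * ((q.den : ℤ) : ZMod p) := by
    have := congrArg (fun r : ℤ => (r : ZMod p)) hZ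
    push_cast at this
    push_cast
    exact this
  rw [Rat.cast_def, div_eq_div_iff (by push_cast at hden ⊢; exact hden) hb]
  push_cast at hZmod ⊢
  exact hZmod

theorem stmt_1 (p : ℕ) [Fact p.Prime] (hp : Odd p) (α : ℕ) (hα : 0 < α) (hαp : α < p) :
    (∑ k ∈ Finset.Icc 1 α, (-1 : ZMod p) ^ k / (k : ZMod p)) =
      ((-1 : ZMod p) ^ α / 2) *
        ((((eulerPoly (p - 2)).eval ((α : ℚ) + 1) : ℚ) : ZMod p)
          + (-1 : ZMod p) ^ α * (((eulerPoly (p - 2)).eval 0 : ℚ) : ZMod p)) := by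
  have hp' : p.Prime := Fact.out
  have hp2 : p ≠ 2 := by rintro rfl; rw [Nat.odd_iff] at hp; omega
  have hp3 : 3 ≤ p := by have := hp'.two_le; omega
  set m := p - 2 with hmdef
  have hm1 : 1 ≤ m := by omega
  have hmp : m + 1 < p := by omega
  set S : ℤ := ∑ k ∈ Finset.Icc 1 α, (-1)^k * (k:ℤ)^m with hS
  have h2ne : (2 : ZMod p) ≠ 0 := by
    intro h
    rw [show (2:ZMod p) = ((2:ℕ):ZMod p) by norm_num, ZMod.natCast_eq_zero_iff] at h
    have := Nat.le_of_dvd (by norm_num) h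
    omega
  have hL : (∑ k ∈ Finset.Icc 1 α, (-1 : ZMod p) ^ k / (k : ZMod p)) = ((S : ℤ) : ZMod p) := by
    rw [hS]
    push_cast
    refine Finset.sum_congr rfl fun k hk => ?_
    rw [Finset.mem_Icc] at hk
    have hk0 : (k : ZMod p) ≠ 0 := by
      intro h0
      rw [ZMod.natCast_eq_zero_iff] at h0
      have := Nat.le_of_dvd (by omega) h0
      omega
    have h1 : (k:ZMod p) * (k:ZMod p)^m = 1 := by
      rw [← pow_succ', show m + 1 = p - 1 by omega]
      exact ZMod.pow_card_sub_one_eq_one hk0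
    rw [div_eq_mul_inv, ← inv_eq_of_mul_eq_one_right h1]
  have hSQ : ((S:ℤ):ℚ) = ∑ k ∈ Finset.Icc 1 α, (-1:ℚ)^k * (k:ℚ)^m := by
    rw [hS]; push_cast; rfl
  set q1 := (eulerPoly m).eval ((α:ℚ)+1) with hq1
  set q0 := (eulerPoly m).eval 0 with hq0
  have hQ2 : 2*((S:ℤ):ℚ) = (-1:ℚ)^α * q1 + q0 := by
    rw [hSQ]; exact euler_sum_eq m hm1 α
  obtain ⟨a0, b0, hb0, h0⟩ := PI_euler_zero hp' hp2 m hmp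
  rw [← hq0] at h0
  have hsq : (-1:ℚ)^α * (-1:ℚ)^α = 1 := by
    rw [← pow_add, ← two_mul, pow_mul]; norm_num
  set a1 : ℤ := (-1)^α * (2*S*b0 - a0) with ha1
  have h1 : q1 * (b0:ℚ) = (a1:ℚ) := by
    rw [ha1]
    push_cast
    linear_combination (-(-1:ℚ)^α * (b0:ℚ)) * hQ2 - (q1*(b0:ℚ)) * hsq - ((-1:ℚ)^α) * h0
  have hb0Z : ((b0:ℤ):ZMod p) ≠ 0 := by
    rw [Ne, ZMod.intCast_zmod_eq_zero_iff_dvd]; exact hb0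
  have hc1 : ((q1:ℚ) : ZMod p) = (a1 : ZMod p) / (b0 : ZMod p) :=
    ratCast_eq_div p q1 a1 b0 hb0Z h1
  have hc0 : ((q0:ℚ) : ZMod p) = (a0 : ZMod p) / (b0 : ZMod p) :=
    ratCast_eq_div p q0 a0 b0 hb0Z h0
  rw [hL, hc1, hc0]
  have hsZ : (-1:ZMod p)^α * (-1:ZMod p)^α = 1 := by
    rw [← pow_add, ← two_mul, pow_mul]; norm_num
  have ha1Z : ((a1:ℤ) : ZMod p)
      = (-1:ZMod p)^α * (2*((S:ℤ):ZMod p)*((b0:ℤ):ZMod p) - ((a0:ℤ):ZMod p)) := by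
    rw [ha1]; push_cast; ring
  rw [ha1Z]
  field_simp
  linear_combination (-2 * ((S:ℤ):ZMod p) * ((b0:ℤ):ZMod p)) * hsZ
end
end

section
/- Let n be a positive odd integer. Then ∑_{k=1}^{n-1} (-1)^k/(1-q^k) ≡ 2·∑_{k=1}^{(n-1)/2} 1/(1-q^{2k}) - (n-1)/2 (mod Φ_n(q)), where the congruence of rational functions A(q)/B(q) ≡ 0 (mod Φ_n(q)) means Φ_n(q) divides the numerator A(q) and is coprime to the denominator B(q). -/
open Finset Polynomial

noncomputable section

/-- The image of a polynomial in the field of rational functions. -/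
def toRF (f : Polynomial ℚ) : RatFunc ℚ := algebraMap (Polynomial ℚ) (RatFunc ℚ) f

/-- The `q`-Pochhammer `(q;q)_m = ∏_{i=1}^m (1 - q^i)` as a rational function in `q`. -/
def qfac (m : ℕ) : RatFunc ℚ := ∏ i ∈ Finset.range m, (1 - RatFunc.X ^ (i + 1))

/-- Gaussian binomial coefficient `[m choose j]_q = (q;q)_m / ((q;q)_j (q;q)_{m-j})`. -/
def qbinom (m j : ℕ) : RatFunc ℚ := qfac m / (qfac j * qfac (m - j))

/-- The `q`-integer `[m]_q = 1 + q + ⋯ + q^{m-1}`. -/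
def qint (m : ℕ) : RatFunc ℚ := ∑ i ∈ Finset.range m, RatFunc.X ^ i

/-- The `q`-Fermat quotient `Q_n(2,q) = ((q^2;q^2)_{n-1}/(q;q)_{n-1} - 1)/[n]_q`. -/
def qFermat (n : ℕ) : RatFunc ℚ :=
  ((∏ i ∈ Finset.range (n - 1), (1 - RatFunc.X ^ (2 * (i + 1)))) /
      (∏ i ∈ Finset.range (n - 1), (1 - RatFunc.X ^ (i + 1))) - 1) / qint n

/-- Congruence of rational functions modulo `Φ_n(q)^e`: the difference can be written as
`Φ_n(q)^e · f / g` with `g` not divisible by `Φ_n(q)`. -/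
def phiCong (n e : ℕ) (A B : RatFunc ℚ) : Prop :=
  ∃ f g : Polynomial ℚ, ¬ (Polynomial.cyclotomic n ℚ ∣ g) ∧
    (A - B) * toRF g = toRF ((Polynomial.cyclotomic n ℚ) ^ e * f)


lemma poly_ne (k : ℕ) (hk : k ≠ 0) : (1 - Polynomial.X ^ k : Polynomial ℚ) ≠ 0 := by
  intro h
  have h1 : (Polynomial.X : Polynomial ℚ) ^ k = 1 := by
    rwa [sub_eq_zero, eq_comm] at h
  have := congrArg Polynomial.natDegree h1
  simp at this
  exact hk this

lemma toRF_one_sub (k : ℕ) : toRF (1 - Polynomial.X ^ k) = 1 - RatFunc.X ^ k := by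
  simp [toRF, map_sub, map_pow, RatFunc.algebraMap_X]

lemma toRF_pow_sub_one (k : ℕ) :
    toRF (Polynomial.X ^ k - 1) = RatFunc.X ^ k - 1 := by
  simp [toRF, map_sub, map_pow, RatFunc.algebraMap_X]

lemma rf_ne (k : ℕ) (hk : k ≠ 0) : (1 - RatFunc.X ^ k : RatFunc ℚ) ≠ 0 := by
  rw [← toRF_one_sub]
  exact RatFunc.algebraMap_ne_zero (poly_ne k hk)

lemma L1 (m : ℕ) :
    ∑ k ∈ Finset.Icc 1 (2 * m), (-1 : RatFunc ℚ) ^ k / (1 - RatFunc.X ^ k)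
      = 2 * ∑ k ∈ Finset.Icc 1 m, 1 / (1 - RatFunc.X ^ (2 * k))
        - ∑ k ∈ Finset.Icc 1 (2 * m), 1 / (1 - RatFunc.X ^ k) := by
  induction m with
  | zero => simp
  | succ m ih =>
    have e1 : Finset.Icc 1 (2 * (m + 1))
        = insert (2 * m + 1) (insert (2 * m + 2) (Finset.Icc 1 (2 * m))) := by
      ext x; simp [Finset.mem_Icc, Finset.mem_insert]; omega
    have e2 : Finset.Icc 1 (m + 1) = insert (m + 1) (Finset.Icc 1 m) := by
      ext x; simp [Finset.mem_Icc, Finset.mem_insert]; omega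
    rw [e1, e2]
    rw [Finset.sum_insert (by simp only [Finset.mem_insert, Finset.mem_Icc]; omega),
      Finset.sum_insert (by simp only [Finset.mem_Icc]; omega),
      Finset.sum_insert (by simp only [Finset.mem_Icc]; omega),
      Finset.sum_insert (by simp only [Finset.mem_insert, Finset.mem_Icc]; omega),
      Finset.sum_insert (by simp only [Finset.mem_Icc]; omega), ih]
    have hp1 : ((-1 : RatFunc ℚ)) ^ (2 * m + 1) = -1 := by
      rw [pow_succ, pow_mul]; simp
    have hp2 : ((-1 : RatFunc ℚ)) ^ (2 * m + 2) = 1 := by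
      rw [pow_add, pow_mul]; simp
    have he : 2 * (m + 1) = 2 * m + 2 := by ring
    rw [hp1, hp2, he]
    ring

lemma pairsum (m : ℕ) :
    ∑ k ∈ Finset.Icc 1 (2 * m), (1 : RatFunc ℚ) / (1 - RatFunc.X ^ k)
      = ∑ k ∈ Finset.Icc 1 m,
          ((1 : RatFunc ℚ) / (1 - RatFunc.X ^ k) + 1 / (1 - RatFunc.X ^ (2 * m + 1 - k))) := by
  rw [Finset.sum_add_distrib]
  have hsplit : Finset.Icc 1 (2 * m) = Finset.Icc 1 m ∪ Finset.Icc (m + 1) (2 * m) := by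
    ext x; simp [Finset.mem_Icc, Finset.mem_union]; omega
  have hdisj : Disjoint (Finset.Icc 1 m) (Finset.Icc (m + 1) (2 * m)) := by
    rw [Finset.disjoint_left]; intro a ha hb
    simp [Finset.mem_Icc] at ha hb; omega
  rw [hsplit, Finset.sum_union hdisj]
  congr 1
  apply Finset.sum_nbij' (fun i => 2 * m + 1 - i) (fun j => 2 * m + 1 - j)
  · intro a ha; simp [Finset.mem_Icc] at ha ⊢; omega
  · intro a ha; simp [Finset.mem_Icc] at ha ⊢; omega
  · intro a ha; simp [Finset.mem_Icc] at ha; omega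
  · intro a ha; simp [Finset.mem_Icc] at ha; omega
  · intro a ha
    simp only [Finset.mem_Icc] at ha
    have h' : 2 * m + 1 - (2 * m + 1 - a) = a := by omega
    rw [h']

lemma key (m k : ℕ) (hk1 : 1 ≤ k) (hk2 : k ≤ m) :
    (1 : RatFunc ℚ) - 1 / (1 - RatFunc.X ^ k) - 1 / (1 - RatFunc.X ^ (2 * m + 1 - k))
      = (RatFunc.X ^ (2 * m + 1) - 1)
          / ((1 - RatFunc.X ^ k) * (1 - RatFunc.X ^ (2 * m + 1 - k))) := by
  have ha := rf_ne k (by omega)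
  have hb := rf_ne (2 * m + 1 - k) (by omega)
  have hxx : (RatFunc.X : RatFunc ℚ) ^ (2 * m + 1)
      = RatFunc.X ^ k * RatFunc.X ^ (2 * m + 1 - k) := by
    rw [← pow_add]; congr 1; omega
  rw [hxx]
  field_simp
  ring

lemma field_lem (p d r : RatFunc ℚ) (hd : d ≠ 0) : p / d * (d * r) = p * r := by
  field_simp

theorem stmt_3 (n : ℕ) (hn : 0 < n) (hodd : Odd n) :
    phiCong n 1 (∑ k ∈ Finset.Icc 1 (n - 1), (-1 : RatFunc ℚ) ^ k / (1 - RatFunc.X ^ k))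
      (2 * ∑ k ∈ Finset.Icc 1 ((n - 1) / 2), 1 / (1 - RatFunc.X ^ (2 * k))
        - RatFunc.C (((n : ℚ) - 1) / 2)) := by
  obtain ⟨m, hm⟩ := hodd
  obtain ⟨h, hh⟩ := Polynomial.cyclotomic.dvd_X_pow_sub_one n ℚ
  set Φ : Polynomial ℚ := Polynomial.cyclotomic n ℚ with hΦ
  refine ⟨h * ∑ k ∈ Finset.Icc 1 m,
      ∏ j ∈ Finset.Icc 1 (2 * m) \ {k, 2 * m + 1 - k}, (1 - Polynomial.X ^ j),
    ∏ j ∈ Finset.Icc 1 (2 * m), (1 - Polynomial.X ^ j), ?_, ?_⟩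
  · -- Φ does not divide g
    rintro ⟨c, hc⟩
    have hζ := Complex.isPrimitiveRoot_exp n hn.ne'
    have hmin : Φ = minpoly ℚ (Complex.exp (2 * Real.pi * Complex.I / n)) :=
      Polynomial.cyclotomic_eq_minpoly_rat hζ hn
    set ζ := Complex.exp (2 * Real.pi * Complex.I / n)
    have hz : Polynomial.aeval ζ
        (∏ j ∈ Finset.Icc 1 (2 * m), (1 - Polynomial.X ^ j : Polynomial ℚ)) = 0 := by
      rw [hc, map_mul, ← hΦ, hmin, minpoly.aeval, zero_mul]
    rw [map_prod] at hz
    obtain ⟨j, hj, hj0⟩ := Finset.prod_eq_zero_iff.mp hz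
    simp only [map_sub, map_one, map_pow, Polynomial.aeval_X] at hj0
    have hj1 : ζ ^ j = 1 := (sub_eq_zero.mp hj0).symm
    have hdvd := (hζ.pow_eq_one_iff_dvd j).mp hj1
    simp only [Finset.mem_Icc] at hj
    have := Nat.le_of_dvd (by omega) hdvd
    omega
  · -- main identity
    have hn1 : n - 1 = 2 * m := by omega
    have hn2 : (n - 1) / 2 = m := by omega
    rw [hn2, hn1]
    have hconst : RatFunc.C (((n : ℚ) - 1) / 2) = ∑ k ∈ Finset.Icc 1 m, (1 : RatFunc ℚ) := by
      rw [Finset.sum_const, Nat.card_Icc]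
      have hq : ((n : ℚ) - 1) / 2 = (m : ℚ) := by
        have : (n : ℚ) = 2 * (m : ℚ) + 1 := by exact_mod_cast congrArg (Nat.cast : ℕ → ℚ) hm
        rw [this]; ring
      rw [hq]
      simp [nsmul_eq_mul]
    rw [L1 m, hconst]
    have hne : ∀ k, 1 ≤ k → k ≤ m →
        ((1 - RatFunc.X ^ k) * (1 - RatFunc.X ^ (2 * m + 1 - k)) : RatFunc ℚ) ≠ 0 := by
      intro k hk1 hk2
      exact mul_ne_zero (rf_ne k (by omega)) (rf_ne _ (by omega))
    have hAB : 2 * ∑ k ∈ Finset.Icc 1 m, 1 / (1 - RatFunc.X ^ (2 * k))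
          - ∑ k ∈ Finset.Icc 1 (2 * m), 1 / (1 - RatFunc.X ^ k)
          - (2 * ∑ k ∈ Finset.Icc 1 m, 1 / (1 - RatFunc.X ^ (2 * k))
              - ∑ k ∈ Finset.Icc 1 m, (1 : RatFunc ℚ))
        = ∑ k ∈ Finset.Icc 1 m, (RatFunc.X ^ (2 * m + 1) - 1)
            / ((1 - RatFunc.X ^ k) * (1 - RatFunc.X ^ (2 * m + 1 - k))) := by
      rw [pairsum m]
      rw [show ∀ a b c : RatFunc ℚ, 2 * a - b - (2 * a - c) = c - b from fun a b c => by ring]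
      rw [← Finset.sum_sub_distrib]
      apply Finset.sum_congr rfl
      intro k hk
      simp only [Finset.mem_Icc] at hk
      rw [← key m k hk.1 hk.2]
      ring
    rw [hAB, Finset.sum_mul]
    have hgsplit : ∀ k, 1 ≤ k → k ≤ m →
        (∏ j ∈ Finset.Icc 1 (2 * m), (1 - Polynomial.X ^ j : Polynomial ℚ))
          = ((1 - Polynomial.X ^ k) * (1 - Polynomial.X ^ (2 * m + 1 - k)))
            * ∏ j ∈ Finset.Icc 1 (2 * m) \ {k, 2 * m + 1 - k}, (1 - Polynomial.X ^ j) := by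
      intro k hk1 hk2
      have hsub : ({k, 2 * m + 1 - k} : Finset ℕ) ⊆ Finset.Icc 1 (2 * m) := by
        intro x hx
        simp only [Finset.mem_insert, Finset.mem_singleton] at hx
        simp only [Finset.mem_Icc]; omega
      rw [← Finset.prod_sdiff hsub, Finset.prod_pair (by omega)]
      ring
    have hterm : ∀ k ∈ Finset.Icc 1 m,
        (RatFunc.X ^ (2 * m + 1) - 1)
            / ((1 - RatFunc.X ^ k) * (1 - RatFunc.X ^ (2 * m + 1 - k)))
            * toRF (∏ j ∈ Finset.Icc 1 (2 * m), (1 - Polynomial.X ^ j))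
          = toRF ((Polynomial.X ^ (2 * m + 1) - 1)
              * ∏ j ∈ Finset.Icc 1 (2 * m) \ {k, 2 * m + 1 - k}, (1 - Polynomial.X ^ j)) := by
      intro k hk
      simp only [Finset.mem_Icc] at hk
      have hd := hne k hk.1 hk.2
      rw [hgsplit k hk.1 hk.2]
      have e1 : toRF (((1 - Polynomial.X ^ k) * (1 - Polynomial.X ^ (2 * m + 1 - k)))
            * ∏ j ∈ Finset.Icc 1 (2 * m) \ {k, 2 * m + 1 - k}, (1 - Polynomial.X ^ j))
          = ((1 - RatFunc.X ^ k) * (1 - RatFunc.X ^ (2 * m + 1 - k)))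
            * toRF (∏ j ∈ Finset.Icc 1 (2 * m) \ {k, 2 * m + 1 - k}, (1 - Polynomial.X ^ j)) := by
        simp only [toRF, map_mul, map_sub, map_one, map_pow, RatFunc.algebraMap_X]
      have e2 : toRF ((Polynomial.X ^ (2 * m + 1) - 1)
            * ∏ j ∈ Finset.Icc 1 (2 * m) \ {k, 2 * m + 1 - k}, (1 - Polynomial.X ^ j))
          = (RatFunc.X ^ (2 * m + 1) - 1)
            * toRF (∏ j ∈ Finset.Icc 1 (2 * m) \ {k, 2 * m + 1 - k}, (1 - Polynomial.X ^ j)) := by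
        simp only [toRF, map_mul, map_sub, map_one, map_pow, RatFunc.algebraMap_X]
      rw [e1, e2, field_lem _ _ _ hd]
    rw [Finset.sum_congr rfl hterm]
    have : ((Polynomial.X : Polynomial ℚ) ^ (2 * m + 1) - 1) = Φ * h := by
      rw [← hm]; exact hh
    simp only [toRF, ← map_sum, ← Finset.mul_sum, this, pow_one, mul_assoc]
    rfl
end
end

section
/- Let n be a positive odd integer coprime to 2 (so n odd). Then ∑_{k=1}^{(n-1)/2} 1/(1-q^{2k}) ≡ -Q_n(2,q)/(1-q) (mod Φ_n(q)), where Q_n(2,q) = ((q^2;q^2)_{n-1}/(q;q)_{n-1} - 1)/[n]_q is the q-Fermat quotient. -/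
open Finset Polynomial

noncomputable section

/-! ### Auxiliary lemmas -/

lemma toRF_inj : Function.Injective toRF := RatFunc.algebraMap_injective ℚ

lemma toRF_ne_zero {f : ℚ[X]} (h : f ≠ 0) : toRF f ≠ 0 := by
  simpa [toRF] using fun hh => h (toRF_inj (by simpa [toRF] using hh))

lemma toRF_X : toRF Polynomial.X = RatFunc.X := RatFunc.algebraMap_X

lemma toRF_one_sub_pow (j : ℕ) : toRF (1 - Polynomial.X ^ j) = (1 - RatFunc.X ^ j : RatFunc ℚ) := by
  rw [← toRF_X]; simp [toRF]

lemma one_sub_RX_pow_ne_zero {j : ℕ} (hj : 0 < j) : (1 - RatFunc.X ^ j : RatFunc ℚ) ≠ 0 := by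
  rw [← toRF_one_sub_pow]
  refine toRF_ne_zero (fun h => ?_)
  have := congrArg (Polynomial.eval 0) h
  simp [hj.ne'] at this

/-- `x` is integral at the prime `Φ_n`. -/
def isInt (n : ℕ) (x : RatFunc ℚ) : Prop :=
  ∃ f g : Polynomial ℚ, ¬ (cyclotomic n ℚ ∣ g) ∧ x * toRF g = toRF f

lemma phi_prime {n : ℕ} (hn : 0 < n) : Prime (cyclotomic n ℚ) :=
  (cyclotomic.irreducible_rat hn).prime

lemma phi_not_dvd_one {n : ℕ} (hn : 0 < n) : ¬ (cyclotomic n ℚ ∣ (1 : ℚ[X])) :=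
  fun h => (phi_prime hn).not_unit (isUnit_of_dvd_one h)

lemma isInt_toRF {n : ℕ} (hn : 0 < n) (f : ℚ[X]) : isInt n (toRF f) :=
  ⟨f, 1, phi_not_dvd_one hn, by simp [toRF]⟩

lemma isInt_add {n : ℕ} (hn : 0 < n) {x y : RatFunc ℚ} (hx : isInt n x) (hy : isInt n y) :
    isInt n (x + y) := by
  obtain ⟨f1, g1, hg1, he1⟩ := hx
  obtain ⟨f2, g2, hg2, he2⟩ := hy
  refine ⟨f1 * g2 + f2 * g1, g1 * g2, fun h => ?_, ?_⟩
  · rcases (phi_prime hn).dvd_mul.mp h with h | h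
    exacts [hg1 h, hg2 h]
  · simp only [toRF, map_mul, map_add]
    calc (x + y) * ((algebraMap ℚ[X] (RatFunc ℚ)) g1 * (algebraMap ℚ[X] (RatFunc ℚ)) g2)
        = (x * toRF g1) * toRF g2 + (y * toRF g2) * toRF g1 := by unfold toRF; ring
      _ = _ := by rw [he1, he2]; unfold toRF; ring

lemma isInt_mul {n : ℕ} (hn : 0 < n) {x y : RatFunc ℚ} (hx : isInt n x) (hy : isInt n y) :
    isInt n (x * y) := by
  obtain ⟨f1, g1, hg1, he1⟩ := hx
  obtain ⟨f2, g2, hg2, he2⟩ := hy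
  refine ⟨f1 * f2, g1 * g2, fun h => ?_, ?_⟩
  · rcases (phi_prime hn).dvd_mul.mp h with h | h
    exacts [hg1 h, hg2 h]
  · calc (x * y) * toRF (g1 * g2) = (x * toRF g1) * (y * toRF g2) := by
          unfold toRF; simp only [map_mul]; ring
      _ = _ := by rw [he1, he2]; unfold toRF; simp only [map_mul]

lemma isInt_sum {n : ℕ} (hn : 0 < n) {ι : Type*} (s : Finset ι) (F : ι → RatFunc ℚ)
    (h : ∀ i ∈ s, isInt n (F i)) : isInt n (∑ i ∈ s, F i) := by
  classical
  induction s using Finset.induction_on with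
  | empty => simpa [toRF] using isInt_toRF hn 0
  | insert _ _ hni ih =>
    rw [Finset.sum_insert hni]
    exact isInt_add hn (h _ (Finset.mem_insert_self _ _))
      (ih fun i hi => h i (Finset.mem_insert_of_mem hi))

lemma isInt_inv {n j : ℕ} (hn : 0 < n) (hj : 0 < j) (hjn : j < n) :
    isInt n (1 / (1 - RatFunc.X ^ j)) := by
  refine ⟨1, 1 - Polynomial.X ^ j, ?_, ?_⟩
  · intro h
    set ζ : ℂ := Complex.exp (2 * Real.pi * Complex.I / n)
    have hζ : IsPrimitiveRoot ζ n := Complex.isPrimitiveRoot_exp n hn.ne'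
    have h2 : cyclotomic n ℂ ∣ (1 - Polynomial.X ^ j : ℂ[X]) := by
      have := _root_.map_dvd (Polynomial.mapRingHom (algebraMap ℚ ℂ)) h
      simpa [Polynomial.map_cyclotomic] using this
    obtain ⟨t, ht⟩ := h2
    have hroot : (1 : ℂ) - ζ ^ j = 0 := by
      have := congrArg (Polynomial.eval ζ) ht
      have hz : Polynomial.eval ζ (cyclotomic n ℂ) = 0 := (hζ.isRoot_cyclotomic hn).eq_zero
      simpa [hz] using this
    have h1 : ζ ^ j = 1 := by linear_combination -hroot
    have := Nat.le_of_dvd hj ((hζ.pow_eq_one_iff_dvd j).mp h1)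
    omega
  · have hne : (1 - RatFunc.X ^ j : RatFunc ℚ) ≠ 0 := one_sub_RX_pow_ne_zero hj
    rw [toRF_one_sub_pow]
    field_simp
    simp [toRF]

lemma prod_split {M : Type*} [CommMonoid M] (f : ℕ → M) (m : ℕ) :
    ∏ i ∈ Finset.range (2 * m), f (i + 1)
      = (∏ k ∈ Finset.range m, f (2 * k + 1)) * ∏ k ∈ Finset.range m, f (2 * k + 2) := by
  induction m with
  | zero => simp
  | succ m ih =>
    have h2 : 2 * (m + 1) = (2 * m + 1) + 1 := by ring
    rw [h2, Finset.prod_range_succ, Finset.prod_range_succ, ih,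
      Finset.prod_range_succ, Finset.prod_range_succ]
    have e1 : 2 * m + 1 + 1 = 2 * m + 2 := by ring
    rw [e1]
    ac_rfl

lemma sum_Icc_one {M : Type*} [AddCommMonoid M] (f : ℕ → M) (m : ℕ) :
    ∑ k ∈ Finset.Icc 1 m, f k = ∑ i ∈ Finset.range m, f (i + 1) := by
  induction m with
  | zero => simp
  | succ m ih =>
    rw [Finset.sum_range_succ, ← ih, Finset.sum_Icc_succ_top (by omega)]

lemma prod_expand {n : ℕ} (hn : 0 < n) (ε : RatFunc ℚ) (hε : isInt n ε)
    (a : ℕ → RatFunc ℚ) (m : ℕ) (ha : ∀ k < m, isInt n (a k)) :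
    ∃ e : RatFunc ℚ, isInt n e ∧
      ∏ k ∈ Finset.range m, (1 + ε * a k)
        = 1 + ε * (∑ k ∈ Finset.range m, a k) + ε ^ 2 * e := by
  induction m with
  | zero => exact ⟨0, by simpa [toRF] using isInt_toRF hn 0, by simp⟩
  | succ m ih =>
    obtain ⟨e, heI, he⟩ := ih (fun k hk => ha k (by omega))
    refine ⟨e + a m * (∑ k ∈ Finset.range m, a k) + ε * (a m * e), ?_, ?_⟩
    · have haI : isInt n (a m) := ha m (by omega)
      have hsI : isInt n (∑ k ∈ Finset.range m, a k) :=
        isInt_sum hn _ _ (fun i hi => ha i (by simpa using Finset.mem_range.mp hi |>.trans_le (Nat.le_succ m)))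
      exact isInt_add hn (isInt_add hn heI (isInt_mul hn haI hsI))
        (isInt_mul hn hε (isInt_mul hn haI heI))
    · rw [Finset.prod_range_succ, he, Finset.sum_range_succ]
      ring

lemma toRF_X_pow (j : ℕ) : toRF (Polynomial.X ^ j) = RatFunc.X ^ j := by
  rw [← toRF_X]; simp [toRF]

lemma field_lem1 (u w : RatFunc ℚ) (hu : 1 - u ≠ 0) :
    1 - u * (1 - w) = (1 - u) * (1 + w * (u * (1 / (1 - u)))) := by
  field_simp
  ring

lemma field_lem2 (u v : RatFunc ℚ) (hu : 1 - u ≠ 0) (hv : 1 - v ≠ 0) :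
    u * (1 / (1 - u)) + 1 / (1 - v) = (1 - u * v) * (1 / (1 - u) * (1 / (1 - v))) := by
  field_simp
  ring

theorem stmt_4 (n : ℕ) (hn : 0 < n) (hodd : Odd n) :
    phiCong n 1 (∑ k ∈ Finset.Icc 1 ((n - 1) / 2), 1 / (1 - RatFunc.X ^ (2 * k)))
      (-(qFermat n) / (1 - RatFunc.X)) := by
  obtain ⟨m, hm⟩ := hodd
  have hnm : n = 2 * m + 1 := by omega
  subst hnm
  have hm2 : (2 * m + 1 - 1) / 2 = m := by omega
  rw [hm2]
  set n := 2 * m + 1 with hn_def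
  have hnpos : 0 < n := hn
  -- the case m = 0
  rcases Nat.eq_zero_or_pos m with rfl | hmpos
  · refine ⟨0, 1, phi_not_dvd_one hnpos, ?_⟩
    have h0 : qFermat n = 0 := by
      simp [qFermat, qint, hn_def]
    simp [h0, toRF]
  -- main case
  set q : RatFunc ℚ := RatFunc.X with hq
  set ε : RatFunc ℚ := 1 - q ^ n with hε_def
  have hεne : ε ≠ 0 := one_sub_RX_pow_ne_zero hnpos
  have hεI : isInt n ε := by
    rw [hε_def, hq, ← toRF_one_sub_pow]
    exact isInt_toRF hnpos _
  have hone_sub_ne : ∀ j : ℕ, 0 < j → (1 - q ^ j : RatFunc ℚ) ≠ 0 :=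
    fun j hj => one_sub_RX_pow_ne_zero hj
  have hqn : q ^ n = 1 - ε := by rw [hε_def]; ring
  -- the odd-index terms
  set a : ℕ → RatFunc ℚ := fun k => q ^ (2 * k + 1) * (1 / (1 - q ^ (2 * k + 1))) with ha_def
  have haI : ∀ k < m, isInt n (a k) := by
    intro k hk
    have h1 : toRF (Polynomial.X ^ (2 * k + 1)) = q ^ (2 * k + 1) := toRF_X_pow _
    exact isInt_mul hnpos (h1 ▸ isInt_toRF hnpos _)
      (isInt_inv hnpos (by omega) (by omega))
  -- numerator and denominator products
  have hPden : (∏ i ∈ Finset.range (n - 1), (1 - q ^ (i + 1)))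
      = (∏ k ∈ Finset.range m, (1 - q ^ (2 * k + 1)))
        * ∏ k ∈ Finset.range m, (1 - q ^ (2 * k + 2)) := by
    have h1 : n - 1 = 2 * m := by omega
    rw [h1]
    exact prod_split (fun j => 1 - q ^ j) m
  have hPnum : (∏ i ∈ Finset.range (n - 1), (1 - q ^ (2 * (i + 1))))
      = (∏ k ∈ Finset.range m, (1 - q ^ (2 * k + 2)))
        * ∏ k ∈ Finset.range m, ((1 - q ^ (2 * k + 1)) * (1 + ε * a k)) := by
    have h1 : n - 1 = m + m := by omega
    rw [h1, Finset.prod_range_add]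
    have e1 : (∏ i ∈ Finset.range m, (1 - q ^ (2 * (i + 1))))
        = ∏ k ∈ Finset.range m, (1 - q ^ (2 * k + 2)) := by
      refine Finset.prod_congr rfl (fun k _ => ?_)
      have : 2 * (k + 1) = 2 * k + 2 := by ring
      rw [this]
    have e2 : (∏ i ∈ Finset.range m, (1 - q ^ (2 * (m + i + 1))))
        = ∏ k ∈ Finset.range m, ((1 - q ^ (2 * k + 1)) * (1 + ε * a k)) := by
      refine Finset.prod_congr rfl (fun k _ => ?_)
      have hexp : 2 * (m + k + 1) = (2 * k + 1) + n := by omega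
      have hval : q ^ (2 * (m + k + 1)) = q ^ (2 * k + 1) * q ^ n := by
        rw [hexp, pow_add]
      rw [hval, hqn]
      exact field_lem1 _ _ (hone_sub_ne _ (by omega))
    rw [e1, e2]
  -- expansion of the product
  obtain ⟨e, heI, hG⟩ := prod_expand hnpos ε hεI a m haI
  -- reindex the main sum
  have hS : (∑ k ∈ Finset.Icc 1 m, 1 / (1 - q ^ (2 * k)))
      = ∑ k ∈ Finset.range m, 1 / (1 - q ^ (2 * (m - k))) := by
    rw [sum_Icc_one (fun k => 1 / (1 - q ^ (2 * k))) m]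
    rw [← Finset.sum_range_reflect (fun i => 1 / (1 - q ^ (2 * (i + 1)))) m]
    refine Finset.sum_congr rfl (fun j hj => ?_)
    have hj' : j < m := Finset.mem_range.mp hj
    have h3 : m - 1 - j + 1 = m - j := by omega
    simp only [h3]
  -- the pairing identity
  have hpair : ∀ k ∈ Finset.range m,
      a k + 1 / (1 - q ^ (2 * (m - k)))
        = ε * (1 / (1 - q ^ (2 * k + 1)) * (1 / (1 - q ^ (2 * (m - k))))) := by
    intro k hk
    have hkm : k < m := Finset.mem_range.mp hk
    have hexp : q ^ (2 * k + 1) * q ^ (2 * (m - k)) = q ^ n := by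
      rw [← pow_add]
      congr 1
      omega
    have h4 := field_lem2 (q ^ (2 * k + 1)) (q ^ (2 * (m - k)))
      (hone_sub_ne _ (by omega)) (hone_sub_ne _ (by omega))
    rw [hexp, ← hε_def] at h4
    exact h4
  have hsum : (∑ k ∈ Finset.range m, a k) + (∑ k ∈ Finset.Icc 1 m, 1 / (1 - q ^ (2 * k)))
      = ε * ∑ k ∈ Finset.range m,
          (1 / (1 - q ^ (2 * k + 1)) * (1 / (1 - q ^ (2 * (m - k))))) := by
    rw [hS, ← Finset.sum_add_distrib, Finset.mul_sum]
    exact Finset.sum_congr rfl hpair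
  -- value of B
  have h1q : (1 - q : RatFunc ℚ) ≠ 0 := by
    have := hone_sub_ne 1 (by omega)
    simpa using this
  have hqint : qint n * (1 - q) = ε := by
    have hgeo := geom_sum_mul q n
    rw [hε_def]
    unfold qint
    linear_combination -hgeo
  have hqintne : qint n ≠ 0 := by
    intro h
    apply hεne
    rw [← hqint, h, zero_mul]
  -- denominators nonzero
  have hOdne : (∏ k ∈ Finset.range m, (1 - q ^ (2 * k + 1))) ≠ 0 :=
    Finset.prod_ne_zero_iff.mpr (fun k _ => hone_sub_ne _ (by omega))
  have hEvne : (∏ k ∈ Finset.range m, (1 - q ^ (2 * k + 2))) ≠ 0 :=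
    Finset.prod_ne_zero_iff.mpr (fun k _ => hone_sub_ne _ (by omega))
  -- P = G
  have hP : (∏ i ∈ Finset.range (n - 1), (1 - q ^ (2 * (i + 1))))
        / (∏ i ∈ Finset.range (n - 1), (1 - q ^ (i + 1)))
      = ∏ k ∈ Finset.range m, (1 + ε * a k) := by
    rw [hPnum, hPden, Finset.prod_mul_distrib]
    rw [show (∏ k ∈ Finset.range m, (1 - q ^ (2 * k + 2)))
          * ((∏ k ∈ Finset.range m, (1 - q ^ (2 * k + 1)))
            * ∏ k ∈ Finset.range m, (1 + ε * a k))
        = ((∏ k ∈ Finset.range m, (1 - q ^ (2 * k + 1)))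
            * ∏ k ∈ Finset.range m, (1 - q ^ (2 * k + 2)))
          * ∏ k ∈ Finset.range m, (1 + ε * a k) from by ring]
    exact mul_div_cancel_left₀ _ (mul_ne_zero hOdne hEvne)
  -- B = (1 - G)/ε
  have hB : -(qFermat n) / (1 - q)
      = (1 - ∏ k ∈ Finset.range m, (1 + ε * a k)) / ε := by
    unfold qFermat
    rw [hP, ← hqint]
    field_simp
    ring
  -- assemble: A - B = ε * (W + e)
  have hGdiv : (1 - ∏ k ∈ Finset.range m, (1 + ε * a k)) / ε
      = -(∑ k ∈ Finset.range m, a k) - ε * e := by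
    rw [hG]
    field_simp
    ring
  have hdiff : (∑ k ∈ Finset.Icc 1 m, 1 / (1 - q ^ (2 * k)))
        - (1 - ∏ k ∈ Finset.range m, (1 + ε * a k)) / ε
      = ε * ((∑ k ∈ Finset.range m,
          (1 / (1 - q ^ (2 * k + 1)) * (1 / (1 - q ^ (2 * (m - k)))))) + e) := by
    rw [hGdiv]
    linear_combination hsum
  -- integrality of W + e
  have hWI : isInt n (∑ k ∈ Finset.range m,
      (1 / (1 - q ^ (2 * k + 1)) * (1 / (1 - q ^ (2 * (m - k)))))) := by
    refine isInt_sum hnpos _ _ (fun k hk => ?_)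
    have hkm : k < m := Finset.mem_range.mp hk
    exact isInt_mul hnpos (isInt_inv hnpos (by omega) (by omega))
      (isInt_inv hnpos (by omega) (by omega))
  obtain ⟨f, g, hg, hfg⟩ := isInt_add hnpos hWI heI
  -- the cyclotomic factorization of 1 - X^n
  obtain ⟨g0, hg0eq⟩ := cyclotomic.dvd_X_pow_sub_one n ℚ
  have hsq : Squarefree (Polynomial.X ^ n - 1 : ℚ[X]) := by
    refine (Polynomial.X_pow_sub_one_separable_iff.mpr ?_).squarefree
    exact_mod_cast (Nat.cast_ne_zero (R := ℚ)).mpr hnpos.ne'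
  have hg0nd : ¬ cyclotomic n ℚ ∣ g0 := by
    rintro ⟨t, ht⟩
    refine (phi_prime hnpos).not_unit (hsq (cyclotomic n ℚ) ⟨t, ?_⟩)
    rw [hg0eq, ht]
    ring
  have hεRF : ε = toRF (1 - Polynomial.X ^ n) := by
    rw [toRF_one_sub_pow, hε_def, hq]
  refine ⟨-(g0 * f), g, hg, ?_⟩
  calc ((∑ k ∈ Finset.Icc 1 m, 1 / (1 - q ^ (2 * k))) - -(qFermat n) / (1 - q)) * toRF g
      = (ε * ((∑ k ∈ Finset.range m,
          (1 / (1 - q ^ (2 * k + 1)) * (1 / (1 - q ^ (2 * (m - k)))))) + e)) * toRF g := by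
        rw [hB, hdiff]
    _ = ε * (((∑ k ∈ Finset.range m,
          (1 / (1 - q ^ (2 * k + 1)) * (1 / (1 - q ^ (2 * (m - k)))))) + e) * toRF g) := by
        ring
    _ = ε * toRF f := by rw [hfg]
    _ = toRF ((1 - Polynomial.X ^ n) * f) := by
        rw [hεRF]
        unfold toRF
        rw [map_mul]
    _ = toRF (cyclotomic n ℚ ^ 1 * -(g0 * f)) := by
        congr 1
        rw [pow_one]
        have h5 : (1 : ℚ[X]) - Polynomial.X ^ n = -(Polynomial.X ^ n - 1) := by ring
        rw [h5, hg0eq]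
        ring
end
end

section
/- Let n be a positive odd integer and α a positive even integer with α ≤ n. Then ∑_{k=1}^{n-1} (-1)^k/(1-q^{k+α}) ≡ -2·∑_{k=1}^{α} (-1)^k/(1-q^k) - 2Q_n(2,q)/(1-q) - 1/(1-q^n) - (n-1)/2 + 1/(1-q^α) (mod Φ_n(q)). -/
open Finset Polynomial

noncomputable section

namespace S6

lemma toRF_inj : Function.Injective toRF := RatFunc.algebraMap_injective ℚ

@[simp] lemma toRF_X : toRF Polynomial.X = RatFunc.X := RatFunc.algebraMap_X
@[simp] lemma toRF_one : toRF 1 = 1 := map_one _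
@[simp] lemma toRF_zero : toRF 0 = 0 := map_zero _
@[simp] lemma toRF_add (a b) : toRF (a + b) = toRF a + toRF b := map_add _ _ _
@[simp] lemma toRF_sub (a b) : toRF (a - b) = toRF a - toRF b := map_sub _ _ _
@[simp] lemma toRF_neg (a) : toRF (-a) = -toRF a := map_neg _ _
@[simp] lemma toRF_mul (a b) : toRF (a * b) = toRF a * toRF b := map_mul _ _ _
@[simp] lemma toRF_pow (a) (m : ℕ) : toRF (a ^ m) = toRF a ^ m := map_pow _ _ _
@[simp] lemma toRF_C (r : ℚ) : toRF (Polynomial.C r) = RatFunc.C r := RatFunc.algebraMap_C r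
@[simp] lemma toRF_natCast (m : ℕ) : toRF (m : Polynomial ℚ) = (m : RatFunc ℚ) := map_natCast _ _
@[simp] lemma toRF_ofNat (m : ℕ) [m.AtLeastTwo] :
    toRF (OfNat.ofNat m) = OfNat.ofNat m := map_ofNat _ _
@[simp] lemma toRF_sum {ι} (s : Finset ι) (f : ι → Polynomial ℚ) :
    toRF (∑ i ∈ s, f i) = ∑ i ∈ s, toRF (f i) := map_sum _ _ _
@[simp] lemma toRF_prod {ι} (s : Finset ι) (f : ι → Polynomial ℚ) :
    toRF (∏ i ∈ s, f i) = ∏ i ∈ s, toRF (f i) := map_prod _ _ _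

lemma one_sub_X_pow_ne {j : ℕ} (hj : 0 < j) : (1 : RatFunc ℚ) - RatFunc.X ^ j ≠ 0 := by
  have : toRF (1 - Polynomial.X ^ j) ≠ 0 := by
    intro h
    have h2 : (1 - Polynomial.X ^ j : Polynomial ℚ) = 0 := toRF_inj (by rw [toRF_zero]; exact h)
    have hc := congrArg (fun p : Polynomial ℚ => p.coeff j) h2
    simp [Polynomial.coeff_one, hj.ne'] at hc
  simpa using this

def zetaC (n : ℕ) : ℂ := Complex.exp (2 * Real.pi * Complex.I / n)

lemma zeta_prim {n : ℕ} (hn : 0 < n) : IsPrimitiveRoot (zetaC n) n :=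
  Complex.isPrimitiveRoot_exp n hn.ne'

lemma dvd_iff {n : ℕ} (hn : 0 < n) (p : Polynomial ℚ) :
    cyclotomic n ℚ ∣ p ↔ aeval (zetaC n) p = 0 := by
  rw [cyclotomic_eq_minpoly_rat (zeta_prim hn) hn]
  constructor
  · rintro ⟨q, rfl⟩
    rw [map_mul, minpoly.aeval, zero_mul]
  · exact minpoly.dvd ℚ _

section PC
variable {n e : ℕ} {A B C D : RatFunc ℚ}

lemma phi_prime (hn : 0 < n) : Prime (cyclotomic n ℚ) := (cyclotomic.irreducible_rat hn).prime

lemma phi_not_dvd_one (hn : 0 < n) : ¬ (cyclotomic n ℚ ∣ 1) := (phi_prime hn).not_dvd_one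

lemma pc_of_eq (hn : 0 < n) (h : A = B) : phiCong n e A B :=
  ⟨0, 1, phi_not_dvd_one hn, by rw [h, sub_self, zero_mul, mul_zero, toRF_zero]⟩

lemma pc_refl (hn : 0 < n) : phiCong n e A A := pc_of_eq hn rfl

lemma pc_symm (h : phiCong n e A B) : phiCong n e B A := by
  obtain ⟨f, g, hg, hfg⟩ := h
  exact ⟨-f, g, hg, by rw [← neg_sub A B, neg_mul, hfg, mul_neg, ← toRF_neg]⟩

lemma pc_add (hn : 0 < n) (h1 : phiCong n e A B) (h2 : phiCong n e C D) :
    phiCong n e (A + C) (B + D) := by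
  obtain ⟨f1, g1, hg1, he1⟩ := h1
  obtain ⟨f2, g2, hg2, he2⟩ := h2
  refine ⟨f1 * g2 + f2 * g1, g1 * g2, fun hd => ?_, ?_⟩
  · rcases (phi_prime hn).2.2 _ _ hd with h | h
    exacts [hg1 h, hg2 h]
  · have : A + C - (B + D) = (A - B) + (C - D) := by ring
    rw [this, toRF_mul, add_mul]
    calc (A - B) * (toRF g1 * toRF g2) + (C - D) * (toRF g1 * toRF g2)
        = ((A - B) * toRF g1) * toRF g2 + ((C - D) * toRF g2) * toRF g1 := by ring
      _ = toRF (cyclotomic n ℚ ^ e * f1) * toRF g2 + toRF (cyclotomic n ℚ ^ e * f2) * toRF g1 := by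
          rw [he1, he2]
      _ = toRF (cyclotomic n ℚ ^ e * (f1 * g2 + f2 * g1)) := by
          rw [← toRF_mul, ← toRF_mul, ← toRF_add]; ring_nf

lemma pc_neg (h : phiCong n e A B) : phiCong n e (-A) (-B) := by
  obtain ⟨f, g, hg, he⟩ := h
  exact ⟨-f, g, hg, by
    have : -A - -B = -(A - B) := by ring
    rw [this, neg_mul, he, ← toRF_neg]; ring_nf⟩

lemma pc_sub (hn : 0 < n) (h1 : phiCong n e A B) (h2 : phiCong n e C D) :
    phiCong n e (A - C) (B - D) := by
  have := pc_add hn h1 (pc_neg h2)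
  simpa [sub_eq_add_neg] using this

lemma pc_trans (hn : 0 < n) (h1 : phiCong n e A B) (h2 : phiCong n e B C) :
    phiCong n e A C := by
  have h3 := pc_add hn h1 h2
  have : A + B - (B + C) = A - C := by ring
  obtain ⟨f, g, hg, he⟩ := h3
  exact ⟨f, g, hg, by rw [← this]; exact he⟩

lemma pc_mul_left (p : Polynomial ℚ) (h : phiCong n e A B) :
    phiCong n e (toRF p * A) (toRF p * B) := by
  obtain ⟨f, g, hg, he⟩ := h
  refine ⟨p * f, g, hg, ?_⟩
  have : toRF p * A - toRF p * B = toRF p * (A - B) := by ring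
  rw [this, mul_assoc, he, ← toRF_mul]
  ring_nf

lemma pc_sum (hn : 0 < n) {ι : Type} (s : Finset ι) (F G : ι → RatFunc ℚ)
    (h : ∀ i ∈ s, phiCong n e (F i) (G i)) :
    phiCong n e (∑ i ∈ s, F i) (∑ i ∈ s, G i) := by
  classical
  induction s using Finset.induction_on with
  | empty => simpa using pc_refl (e := e) hn
  | @insert a s' hx ih =>
    rw [Finset.sum_insert hx, Finset.sum_insert hx]
    exact pc_add hn (h a (Finset.mem_insert_self a s'))
      (ih fun i hi => h i (Finset.mem_insert_of_mem hi))

lemma pc_sub_zero (h : phiCong n e (A - B) 0) : phiCong n e A B := by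
  obtain ⟨f, g, hg, he⟩ := h
  exact ⟨f, g, hg, by rw [← sub_zero (A - B)]; exact he⟩

lemma pc_to_sub_zero (h : phiCong n e A B) : phiCong n e (A - B) 0 := by
  obtain ⟨f, g, hg, he⟩ := h
  exact ⟨f, g, hg, by rw [sub_zero]; exact he⟩

end PC
lemma zeta_pow_sub_ne {n : ℕ} (hn : 0 < n) {j : ℕ} (hj : 0 < j) (hjn : j < n) :
    (1 : ℂ) - zetaC n ^ j ≠ 0 := by
  have := (zeta_prim hn).pow_ne_one_of_pos_of_lt hj.ne' hjn
  intro h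
  exact this (by linear_combination -h)

lemma zeta_pow_n {n : ℕ} (hn : 0 < n) : zetaC n ^ n = 1 := (zeta_prim hn).pow_eq_one

lemma pcZero {n : ℕ} (hn : 0 < n) (p g : Polynomial ℚ)
    (hg : aeval (zetaC n) g ≠ 0) (hp : aeval (zetaC n) p = 0) {A : RatFunc ℚ}
    (hA : A * toRF g = toRF p) : phiCong n 1 A 0 := by
  obtain ⟨f, hf⟩ := (dvd_iff hn p).2 hp
  refine ⟨f, g, fun hd => hg ((dvd_iff hn g).1 hd), ?_⟩
  rw [sub_zero, hA, hf, pow_one]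

lemma pc_shift {n : ℕ} (hn : 0 < n) {j : ℕ} (hj : 0 < j) (hjn : j < n) :
    phiCong n 1 (1 / (1 - RatFunc.X ^ (j + n))) (1 / (1 - RatFunc.X ^ j)) := by
  apply pc_sub_zero
  apply pcZero hn (Polynomial.X ^ (j + n) - Polynomial.X ^ j)
      ((1 - Polynomial.X ^ (j + n)) * (1 - Polynomial.X ^ j))
  · simp only [map_mul, map_sub, map_one, map_pow, aeval_X]
    refine mul_ne_zero ?_ (zeta_pow_sub_ne hn hj hjn)
    have : zetaC n ^ (j + n) = zetaC n ^ j := by rw [pow_add, zeta_pow_n hn, mul_one]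
    rw [this]
    exact zeta_pow_sub_ne hn hj hjn
  · simp only [map_sub, map_pow, aeval_X]
    rw [pow_add, zeta_pow_n hn, mul_one, sub_self]
  · have h1 : (1 : RatFunc ℚ) - RatFunc.X ^ (j + n) ≠ 0 := one_sub_X_pow_ne (by omega)
    have h2 : (1 : RatFunc ℚ) - RatFunc.X ^ j ≠ 0 := one_sub_X_pow_ne hj
    simp only [toRF_mul, toRF_sub, toRF_one, toRF_pow, toRF_X]
    field_simp
    ring

lemma one_div_mul_prod {s : Finset ℕ} {j : ℕ} (hj : j ∈ s) (F : ℕ → RatFunc ℚ)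
    (hF : ∀ i ∈ s, F i ≠ 0) :
    1 / F j * ∏ i ∈ s, F i = ∏ i ∈ s.erase j, F i := by
  rw [← Finset.mul_prod_erase s F hj, ← mul_assoc, one_div, inv_mul_cancel₀ (hF j hj), one_mul]

lemma sum_inv_zeta {n h : ℕ} (hnh : n = 2 * h + 1) :
    ∑ j ∈ Finset.range (2 * h), ((1 : ℂ) - zetaC n ^ (j + 1))⁻¹ = (h : ℂ) := by
  have hn : 0 < n := by omega
  set ζ := zetaC n with hζ
  set S := ∑ j ∈ Finset.range (2 * h), ((1 : ℂ) - ζ ^ (j + 1))⁻¹ with hS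
  have hrefl : S = ∑ j ∈ Finset.range (2 * h), ((1 : ℂ) - ζ ^ (2 * h - j))⁻¹ := by
    rw [hS, ← Finset.sum_range_reflect]
    refine Finset.sum_congr rfl fun j hj => ?_
    have hj' := Finset.mem_range.1 hj
    congr 3
    omega
  have key : ∀ j ∈ Finset.range (2 * h),
      ((1 : ℂ) - ζ ^ (j + 1))⁻¹ + ((1 : ℂ) - ζ ^ (2 * h - j))⁻¹ = 1 := by
    intro j hj
    have hj' := Finset.mem_range.1 hj
    have hu : (1 : ℂ) - ζ ^ (j + 1) ≠ 0 := zeta_pow_sub_ne hn (by omega) (by omega)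
    have hv : (1 : ℂ) - ζ ^ (2 * h - j) ≠ 0 := zeta_pow_sub_ne hn (by omega) (by omega)
    have huv : ζ ^ (j + 1) * ζ ^ (2 * h - j) = 1 := by
      rw [← pow_add]
      have : j + 1 + (2 * h - j) = n := by omega
      rw [this]
      exact zeta_pow_n hn
    field_simp
    linear_combination -huv
  have h2S : S + S = 2 * (h : ℂ) := by
    calc S + S = ∑ j ∈ Finset.range (2 * h),
        (((1 : ℂ) - ζ ^ (j + 1))⁻¹ + ((1 : ℂ) - ζ ^ (2 * h - j))⁻¹) := by
          rw [Finset.sum_add_distrib, ← hS, ← hrefl]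
      _ = ∑ _j ∈ Finset.range (2 * h), (1 : ℂ) := Finset.sum_congr rfl key
      _ = 2 * (h : ℂ) := by rw [Finset.sum_const, Finset.card_range, nsmul_eq_mul, mul_one]; push_cast; ring
  have : (2 : ℂ) * S = 2 * (h : ℂ) := by linear_combination h2S
  exact mul_left_cancel₀ two_ne_zero this

lemma pc_sumT {n h : ℕ} (hnh : n = 2 * h + 1) :
    phiCong n 1 (∑ j ∈ Finset.range (2 * h), 1 / (1 - RatFunc.X ^ (j + 1)))
      ((h : RatFunc ℚ)) := by
  have hn : 0 < n := by omega
  apply pc_sub_zero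
  apply pcZero hn
      ((∑ j ∈ Finset.range (2 * h), ∏ i ∈ (Finset.range (2 * h)).erase j,
          (1 - Polynomial.X ^ (i + 1)))
        - (h : Polynomial ℚ) * ∏ j ∈ Finset.range (2 * h), (1 - Polynomial.X ^ (j + 1)))
      (∏ j ∈ Finset.range (2 * h), (1 - Polynomial.X ^ (j + 1)))
  · simp only [map_prod, map_sub, map_one, map_pow, aeval_X]
    rw [Finset.prod_ne_zero_iff]
    intro i hi
    have hi' := Finset.mem_range.1 hi
    exact zeta_pow_sub_ne hn (by omega) (by omega)
  · simp only [map_sub, map_sum, map_prod, map_mul, map_natCast, map_one, map_pow, aeval_X]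
    have hzero : ∀ i ∈ Finset.range (2 * h), (1 : ℂ) - zetaC n ^ (i + 1) ≠ 0 := by
      intro i hi
      have hi' := Finset.mem_range.1 hi
      exact zeta_pow_sub_ne hn (by omega) (by omega)
    have herase : ∀ j ∈ Finset.range (2 * h),
        ∏ i ∈ (Finset.range (2 * h)).erase j, ((1 : ℂ) - zetaC n ^ (i + 1))
          = ((1 : ℂ) - zetaC n ^ (j + 1))⁻¹
            * ∏ i ∈ Finset.range (2 * h), ((1 : ℂ) - zetaC n ^ (i + 1)) := by
      intro j hj
      rw [← Finset.mul_prod_erase _ _ hj, ← mul_assoc,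
        inv_mul_cancel₀ (hzero j hj), one_mul]
    rw [Finset.sum_congr rfl herase, ← Finset.sum_mul, sum_inv_zeta hnh, sub_eq_zero]
  · have hne : ∀ i ∈ Finset.range (2 * h), (1 : RatFunc ℚ) - RatFunc.X ^ (i + 1) ≠ 0 :=
      fun i _ => one_sub_X_pow_ne (by omega)
    simp only [toRF_sub, toRF_sum, toRF_prod, toRF_mul, toRF_natCast, toRF_one, toRF_pow, toRF_X]
    rw [sub_mul, Finset.sum_mul]
    congr 1
    refine Finset.sum_congr rfl fun j hj => ?_
    exact one_div_mul_prod hj _ hne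

lemma prod_range_even_odd {R : Type} [CommRing R] (f : ℕ → R) (h : ℕ) :
    ∏ i ∈ Finset.range (2 * h), f i
      = (∏ m ∈ Finset.range h, f (2 * m)) * ∏ m ∈ Finset.range h, f (2 * m + 1) := by
  induction h with
  | zero => simp
  | succ k ih =>
    have h2 : 2 * (k + 1) = 2 * k + 1 + 1 := by ring
    rw [h2, Finset.prod_range_succ, Finset.prod_range_succ, ih, Finset.prod_range_succ,
      Finset.prod_range_succ]
    ring

lemma sum_range_even_odd {R : Type} [CommRing R] (f : ℕ → R) (h : ℕ) :
    ∑ i ∈ Finset.range (2 * h), f i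
      = (∑ m ∈ Finset.range h, f (2 * m)) + ∑ m ∈ Finset.range h, f (2 * m + 1) := by
  induction h with
  | zero => simp
  | succ k ih =>
    have h2 : 2 * (k + 1) = 2 * k + 1 + 1 := by ring
    rw [h2, Finset.sum_range_succ, Finset.sum_range_succ, ih, Finset.sum_range_succ,
      Finset.sum_range_succ]
    ring

lemma prod_add_expansion {R : Type} [CommRing R] (s : Finset ℕ) (a b : ℕ → R) (c : R) :
    ∃ M : R, ∏ j ∈ s, (a j + c * b j)
      = (∏ j ∈ s, a j) + c * (∑ j ∈ s, b j * ∏ i ∈ s.erase j, a i) + c ^ 2 * M := by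
  classical
  induction s using Finset.induction_on with
  | empty => exact ⟨0, by simp⟩
  | @insert x s hx ih =>
    obtain ⟨M, hM⟩ := ih
    refine ⟨a x * M + b x * (∑ j ∈ s, b j * ∏ i ∈ s.erase j, a i) + c * (b x * M), ?_⟩
    have hsum : ∑ j ∈ insert x s, b j * ∏ i ∈ (insert x s).erase j, a i
        = b x * ∏ i ∈ s, a i + a x * ∑ j ∈ s, b j * ∏ i ∈ s.erase j, a i := by
      rw [Finset.sum_insert hx, Finset.erase_insert hx]
      congr 1
      rw [Finset.mul_sum]
      refine Finset.sum_congr rfl fun j hj => ?_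
      have hne : x ≠ j := fun hh => hx (hh ▸ hj)
      rw [Finset.erase_insert_of_ne hne, Finset.prod_insert (fun hc => hx (Finset.mem_of_mem_erase hc))]
      ring
    rw [Finset.prod_insert hx, hM, Finset.prod_insert hx, hsum]
    ring

lemma pc_qFermat {n h : ℕ} (hnh : n = 2 * h + 1) :
    phiCong n 1 (2 * qFermat n / (1 - RatFunc.X))
      (2 * ∑ m ∈ Finset.range h, RatFunc.X ^ (2 * m + 1) * (1 / (1 - RatFunc.X ^ (2 * m + 1)))) := by
  classical
  have hn : 0 < n := by omega
  set a : ℕ → Polynomial ℚ := fun m => 1 - Polynomial.X ^ (2 * m + 1) with ha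
  set b : ℕ → Polynomial ℚ := fun m => Polynomial.X ^ (2 * m + 1) with hb
  set c : Polynomial ℚ := 1 - Polynomial.X ^ n with hc
  set PO : Polynomial ℚ := ∏ m ∈ Finset.range h, a m with hPOd
  set PE : Polynomial ℚ := ∏ m ∈ Finset.range h, (1 - Polynomial.X ^ (2 * m + 2)) with hPEd
  set SO : Polynomial ℚ := ∑ m ∈ Finset.range h, b m * ∏ i ∈ (Finset.range h).erase m, a i
    with hSOd
  obtain ⟨M, hM⟩ := prod_add_expansion (Finset.range h) a b c
  -- polynomial identities
  have hNsplit : (∏ i ∈ Finset.range (n - 1), (1 - Polynomial.X ^ (2 * (i + 1))))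
      = PE * (PO + c * (SO + c * M)) := by
    have h1 : n - 1 = h + h := by omega
    rw [h1, Finset.prod_range_add]
    have h2 : (∏ i ∈ Finset.range h, (1 - Polynomial.X ^ (2 * (i + 1)))) = PE := by
      refine Finset.prod_congr rfl fun i _ => ?_
      have : 2 * (i + 1) = 2 * i + 2 := by ring
      rw [this]
    have h3 : (∏ i ∈ Finset.range h, (1 - Polynomial.X ^ (2 * (h + i + 1))))
        = ∏ m ∈ Finset.range h, (a m + c * b m) := by
      refine Finset.prod_congr rfl fun i _ => ?_
      have he : 2 * (h + i + 1) = (2 * i + 1) + n := by omega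
      rw [he, ha, hb, hc, pow_add]
      ring
    rw [h2, h3, hM]
    ring
  have hDsplit : (∏ i ∈ Finset.range (n - 1), (1 - Polynomial.X ^ (i + 1))) = PO * PE := by
    have h1 : n - 1 = 2 * h := by omega
    rw [h1, prod_range_even_odd (fun i => 1 - Polynomial.X ^ (i + 1)) h]
  -- RatFunc facts
  have hx1 : (1 : RatFunc ℚ) - RatFunc.X ≠ 0 := by
    have := one_sub_X_pow_ne (j := 1) one_pos
    simpa using this
  have hxn : (1 : RatFunc ℚ) - RatFunc.X ^ n ≠ 0 := one_sub_X_pow_ne hn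
  have hq : (1 - RatFunc.X) * qint n = 1 - RatFunc.X ^ n := by
    have := geom_sum_mul (RatFunc.X (K := ℚ)) n
    unfold qint
    linear_combination -this
  have hqint : qint n ≠ 0 := by
    intro h0
    rw [h0, mul_zero] at hq
    exact hxn hq.symm
  have hPO : toRF PO ≠ 0 := by
    rw [hPOd, toRF_prod, Finset.prod_ne_zero_iff]
    intro m _
    simp only [ha, toRF_sub, toRF_one, toRF_pow, toRF_X]
    exact one_sub_X_pow_ne (by omega)
  have hPE : toRF PE ≠ 0 := by
    rw [hPEd, toRF_prod, Finset.prod_ne_zero_iff]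
    intro m _
    simp only [toRF_sub, toRF_one, toRF_pow, toRF_X]
    exact one_sub_X_pow_ne (by omega)
  -- main identity for pcZero
  have hQF : 2 * qFermat n / (1 - RatFunc.X) = 2 * toRF (SO + c * M) / toRF PO := by
    have hN := congrArg toRF hNsplit
    have hD := congrArg toRF hDsplit
    simp only [toRF_prod, toRF_mul, toRF_add, toRF_sub, toRF_one, toRF_pow, toRF_X] at hN hD
    have hcc : toRF c = (1 - RatFunc.X) * qint n := by
      rw [hc, toRF_sub, toRF_one, toRF_pow, toRF_X, hq]
    unfold qFermat
    simp only [toRF_add, toRF_mul, hcc] at hN ⊢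
    rw [hN, hD]
    field_simp
    ring
  have hSum : (∑ m ∈ Finset.range h, RatFunc.X ^ (2 * m + 1) * (1 / (1 - RatFunc.X ^ (2 * m + 1))))
      * toRF PO = toRF SO := by
    rw [hSOd, toRF_sum, Finset.sum_mul]
    refine Finset.sum_congr rfl fun m hm => ?_
    have hne : ∀ i ∈ Finset.range h, toRF (a i) ≠ 0 := by
      intro i _
      simp only [ha, toRF_sub, toRF_one, toRF_pow, toRF_X]
      exact one_sub_X_pow_ne (by omega)
    have := one_div_mul_prod hm (fun i => toRF (a i)) hne
    simp only [toRF_mul, toRF_prod]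
    rw [hPOd, toRF_prod] at *
    calc RatFunc.X ^ (2 * m + 1) * (1 / (1 - RatFunc.X ^ (2 * m + 1)))
          * ∏ i ∈ Finset.range h, toRF (a i)
        = RatFunc.X ^ (2 * m + 1) * ((1 / toRF (a m)) * ∏ i ∈ Finset.range h, toRF (a i)) := by
          simp only [ha, toRF_sub, toRF_one, toRF_pow, toRF_X]
          ring
      _ = RatFunc.X ^ (2 * m + 1) * ∏ i ∈ (Finset.range h).erase m, toRF (a i) := by rw [this]
      _ = toRF (b m) * ∏ i ∈ (Finset.range h).erase m, toRF (a i) := by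
          rw [hb, toRF_pow, toRF_X]
  apply pc_sub_zero
  apply pcZero hn (2 * (c * M)) PO
  · rw [hPOd]
    simp only [map_prod, ha, map_sub, map_one, map_pow, aeval_X]
    rw [Finset.prod_ne_zero_iff]
    intro m hm
    have := Finset.mem_range.1 hm
    exact zeta_pow_sub_ne hn (by omega) (by omega)
  · simp only [map_mul, map_ofNat, hc, map_sub, map_one, map_pow, aeval_X]
    rw [zeta_pow_n hn, sub_self]
    ring
  · rw [sub_mul, hQF, div_mul_cancel₀ _ hPO, mul_assoc, hSum]
    have h2 : toRF 2 = 2 := by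
      rw [show (2 : Polynomial ℚ) = 1 + 1 by norm_num, toRF_add, toRF_one]
      norm_num
    simp only [toRF_mul, toRF_add, h2]
    ring

def T (j : ℕ) : RatFunc ℚ := 1 / (1 - RatFunc.X ^ j)

def gg (j : ℕ) : RatFunc ℚ := (-1 : RatFunc ℚ) ^ (j + 1) * T (j + 1)

lemma pc_mul_neg_pow {n e k : ℕ} {A B : RatFunc ℚ} (hc : phiCong n e A B) :
    phiCong n e ((-1) ^ k * A) ((-1) ^ k * B) := by
  have h1 := pc_mul_left ((-1 : Polynomial ℚ) ^ k) hc
  have h2 : toRF ((-1 : Polynomial ℚ) ^ k) = (-1 : RatFunc ℚ) ^ k := by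
    rw [toRF_pow, toRF_neg, toRF_one]
  rwa [h2] at h1

end S6

open S6

theorem stmt_6 (n α : ℕ) (hn : 0 < n) (hodd : Odd n) (hα : 0 < α) (heven : Even α)
    (hαn : α ≤ n) :
    phiCong n 1 (∑ k ∈ Finset.Icc 1 (n - 1), (-1 : RatFunc ℚ) ^ k / (1 - RatFunc.X ^ (k + α)))
      (-2 * ∑ k ∈ Finset.Icc 1 α, (-1 : RatFunc ℚ) ^ k / (1 - RatFunc.X ^ k)
        - 2 * qFermat n / (1 - RatFunc.X)
        - 1 / (1 - RatFunc.X ^ n)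
        - RatFunc.C (((n : ℚ) - 1) / 2)
        + 1 / (1 - RatFunc.X ^ α)) := by
  classical
  obtain ⟨h, hnh⟩ := hodd
  rw [show 2 * h + 1 = h + h + 1 by ring] at hnh
  obtain ⟨t, ht⟩ := heven
  have hα2 : 2 ≤ α := by omega
  have hαle : α ≤ 2 * h := by omega
  have hh1 : 1 ≤ h := by omega
  have hnh' : n = 2 * h + 1 := by omega
  have hoddnα : Odd (n - α) := ⟨h - t, by omega⟩
  have hevenα : Even α := ⟨t, ht⟩
  -- Step 1 : exact rewriting of the LHS
  have step1 : (∑ k ∈ Finset.Icc 1 (n - 1), (-1 : RatFunc ℚ) ^ k / (1 - RatFunc.X ^ (k + α)))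
      = (∑ i ∈ Finset.range (n - 1 - α), (-1 : RatFunc ℚ) ^ (i + α + 1) * T (i + α + 1))
        + (-(1 / (1 - RatFunc.X ^ n)))
        + ∑ i ∈ Finset.range (α - 1),
            (-1 : RatFunc ℚ) ^ (n - α + i + 1) * (1 / (1 - RatFunc.X ^ ((i + 1) + n))) := by
    have e0 : Finset.Icc 1 (n - 1) = Finset.Ico 1 n := by
      ext k; simp only [Finset.mem_Icc, Finset.mem_Ico]; omega
    conv_lhs => rw [e0, Finset.sum_Ico_eq_sum_range,
      show n - 1 = ((n - 1 - α) + 1) + (α - 1) by omega,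
      Finset.sum_range_add, Finset.sum_range_succ]
    congr 1
    congr 1
    · refine Finset.sum_congr rfl fun i _ => ?_
      unfold T
      rw [mul_one_div]
      have h1 : (-1 : RatFunc ℚ) ^ (i + α + 1) = (-1) ^ (i + 1) := by
        rw [show i + α + 1 = (i + 1) + α by omega, pow_add, hevenα.neg_one_pow, mul_one]
      rw [h1, show 1 + i = i + 1 by omega, show i + 1 + α = i + α + 1 by omega]
    · rw [show 1 + (n - 1 - α) = n - α by omega, show n - α + α = n by omega,
        hoddnα.neg_one_pow, neg_div]
    · refine Finset.sum_congr rfl fun i _ => ?_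
      rw [show 1 + ((n - 1 - α) + 1 + i) = n - α + i + 1 by omega,
        show n - α + i + 1 + α = (i + 1) + n by omega, mul_one_div]
  -- Step 2 : shift the exponents in the last chunk
  have step2 : phiCong n 1
      ((∑ i ∈ Finset.range (n - 1 - α), (-1 : RatFunc ℚ) ^ (i + α + 1) * T (i + α + 1))
        + (-(1 / (1 - RatFunc.X ^ n)))
        + ∑ i ∈ Finset.range (α - 1),
            (-1 : RatFunc ℚ) ^ (n - α + i + 1) * (1 / (1 - RatFunc.X ^ ((i + 1) + n))))
      ((∑ i ∈ Finset.range (n - 1 - α), (-1 : RatFunc ℚ) ^ (i + α + 1) * T (i + α + 1))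
        + (-(1 / (1 - RatFunc.X ^ n)))
        + ∑ i ∈ Finset.range (α - 1),
            (-1 : RatFunc ℚ) ^ (n - α + i + 1) * T (i + 1)) := by
    refine pc_add hn (pc_refl hn) (pc_sum hn _ _ _ fun i hi => ?_)
    have hi' := Finset.mem_range.1 hi
    exact pc_mul_neg_pow (pc_shift hn (by omega) (by omega))
  -- Step 3 : exact rewriting of the RHS
  have hC : RatFunc.C (((n : ℚ) - 1) / 2) = ((h : ℕ) : RatFunc ℚ) := by
    have e : ((n : ℚ) - 1) / 2 = ((h : ℕ) : ℚ) := by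
      rw [hnh']; push_cast; ring
    rw [e, map_natCast]
  have hIcc : (∑ k ∈ Finset.Icc 1 α, (-1 : RatFunc ℚ) ^ k / (1 - RatFunc.X ^ k))
      = ∑ i ∈ Finset.range α, gg i := by
    have e0 : Finset.Icc 1 α = Finset.Ico 1 (α + 1) := by
      ext k; simp only [Finset.mem_Icc, Finset.mem_Ico]; omega
    rw [e0, Finset.sum_Ico_eq_sum_range, show α + 1 - 1 = α by omega]
    refine Finset.sum_congr rfl fun i _ => ?_
    rw [show 1 + i = i + 1 by omega]
    unfold gg T
    rw [mul_one_div]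
  have step3 : (-2 * ∑ k ∈ Finset.Icc 1 α, (-1 : RatFunc ℚ) ^ k / (1 - RatFunc.X ^ k)
        - 2 * qFermat n / (1 - RatFunc.X)
        - 1 / (1 - RatFunc.X ^ n)
        - RatFunc.C (((n : ℚ) - 1) / 2)
        + 1 / (1 - RatFunc.X ^ α))
      = (-2 * ∑ i ∈ Finset.range α, gg i
        - 2 * qFermat n / (1 - RatFunc.X)
        - 1 / (1 - RatFunc.X ^ n)
        - ((h : ℕ) : RatFunc ℚ)
        + 1 / (1 - RatFunc.X ^ α)) := by
    rw [hIcc, hC]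
  -- Step 4 : replace the Fermat-quotient term
  have step4 : phiCong n 1
      (-2 * ∑ i ∈ Finset.range α, gg i
        - 2 * qFermat n / (1 - RatFunc.X)
        - 1 / (1 - RatFunc.X ^ n)
        - ((h : ℕ) : RatFunc ℚ)
        + 1 / (1 - RatFunc.X ^ α))
      (-2 * ∑ i ∈ Finset.range α, gg i
        - 2 * ∑ m ∈ Finset.range h, RatFunc.X ^ (2 * m + 1) * (1 / (1 - RatFunc.X ^ (2 * m + 1)))
        - 1 / (1 - RatFunc.X ^ n)
        - ((h : ℕ) : RatFunc ℚ)
        + 1 / (1 - RatFunc.X ^ α)) := by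
    exact pc_add hn (pc_sub hn (pc_sub hn (pc_sub hn (pc_refl hn) (pc_qFermat hnh'))
      (pc_refl hn)) (pc_refl hn)) (pc_refl hn)
  -- Step 5 : the final congruence
  have step5 : phiCong n 1
      ((∑ i ∈ Finset.range (n - 1 - α), (-1 : RatFunc ℚ) ^ (i + α + 1) * T (i + α + 1))
        + (-(1 / (1 - RatFunc.X ^ n)))
        + ∑ i ∈ Finset.range (α - 1), (-1 : RatFunc ℚ) ^ (n - α + i + 1) * T (i + 1))
      (-2 * ∑ i ∈ Finset.range α, gg i
        - 2 * ∑ m ∈ Finset.range h, RatFunc.X ^ (2 * m + 1) * (1 / (1 - RatFunc.X ^ (2 * m + 1)))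
        - 1 / (1 - RatFunc.X ^ n)
        - ((h : ℕ) : RatFunc ℚ)
        + 1 / (1 - RatFunc.X ^ α)) := by
    apply pc_sub_zero
    have hchunk1 : (∑ i ∈ Finset.range (n - 1 - α), (-1 : RatFunc ℚ) ^ (i + α + 1) * T (i + α + 1))
        = (∑ j ∈ Finset.range (2 * h), gg j) - ∑ j ∈ Finset.range α, gg j := by
      have e := Finset.sum_range_add gg α (n - 1 - α)
      rw [show α + (n - 1 - α) = 2 * h by omega] at e
      have hterm : ∀ i ∈ Finset.range (n - 1 - α),
          (-1 : RatFunc ℚ) ^ (i + α + 1) * T (i + α + 1) = gg (α + i) := by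
        intro i _
        rw [show i + α + 1 = α + i + 1 by omega]
        rfl
      rw [Finset.sum_congr rfl hterm]
      linear_combination -e
    have hchunk2 : (∑ i ∈ Finset.range (α - 1), (-1 : RatFunc ℚ) ^ (n - α + i + 1) * T (i + 1))
        = -∑ i ∈ Finset.range (α - 1), gg i := by
      rw [← Finset.sum_neg_distrib]
      refine Finset.sum_congr rfl fun i _ => ?_
      show (-1 : RatFunc ℚ) ^ (n - α + i + 1) * T (i + 1) = -((-1) ^ (i + 1) * T (i + 1))
      rw [show n - α + i + 1 = (n - α) + (i + 1) by omega, pow_add, hoddnα.neg_one_pow]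
      ring
    have hSα : (∑ i ∈ Finset.range α, gg i)
        = (∑ i ∈ Finset.range (α - 1), gg i) + 1 / (1 - RatFunc.X ^ α) := by
      have e := Finset.sum_range_succ gg (α - 1)
      rw [show α - 1 + 1 = α by omega] at e
      rw [e]
      congr 1
      show (-1 : RatFunc ℚ) ^ (α - 1 + 1) * T (α - 1 + 1) = 1 / (1 - RatFunc.X ^ α)
      rw [show α - 1 + 1 = α by omega, hevenα.neg_one_pow, one_mul]
      rfl
    have hOx : (∑ m ∈ Finset.range h,
          RatFunc.X ^ (2 * m + 1) * (1 / (1 - RatFunc.X ^ (2 * m + 1))))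
        = (∑ m ∈ Finset.range h, T (2 * m + 1)) - ((h : ℕ) : RatFunc ℚ) := by
      have hterm : ∀ m ∈ Finset.range h,
          RatFunc.X ^ (2 * m + 1) * (1 / (1 - RatFunc.X ^ (2 * m + 1))) = T (2 * m + 1) - 1 := by
        intro m _
        have hne : (1 : RatFunc ℚ) - RatFunc.X ^ (2 * m + 1) ≠ 0 := one_sub_X_pow_ne (by omega)
        unfold T
        field_simp
        ring
      rw [Finset.sum_congr rfl hterm, Finset.sum_sub_distrib, Finset.sum_const,
        Finset.card_range, nsmul_eq_mul, mul_one]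
    have hsplitg : (∑ j ∈ Finset.range (2 * h), gg j)
        = (∑ m ∈ Finset.range h, T (2 * m + 2)) - ∑ m ∈ Finset.range h, T (2 * m + 1) := by
      rw [sum_range_even_odd gg h]
      have h1 : ∀ m ∈ Finset.range h, gg (2 * m) = -T (2 * m + 1) := by
        intro m _
        show (-1 : RatFunc ℚ) ^ (2 * m + 1) * T (2 * m + 1) = -T (2 * m + 1)
        rw [Odd.neg_one_pow ⟨m, by ring⟩]
        ring
      have h2 : ∀ m ∈ Finset.range h, gg (2 * m + 1) = T (2 * m + 2) := by
        intro m _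
        show (-1 : RatFunc ℚ) ^ (2 * m + 1 + 1) * T (2 * m + 1 + 1) = T (2 * m + 2)
        rw [show 2 * m + 1 + 1 = 2 * m + 2 by ring, Even.neg_one_pow ⟨m + 1, by ring⟩, one_mul]
      rw [Finset.sum_congr rfl h1, Finset.sum_congr rfl h2]
      ring_nf
      rw [Finset.sum_neg_distrib]
      ring
    have hsplitT : (∑ j ∈ Finset.range (2 * h), T (j + 1))
        = (∑ m ∈ Finset.range h, T (2 * m + 1)) + ∑ m ∈ Finset.range h, T (2 * m + 2) :=
      sum_range_even_odd (fun j => T (j + 1)) h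
    have hfin : ((∑ i ∈ Finset.range (n - 1 - α), (-1 : RatFunc ℚ) ^ (i + α + 1) * T (i + α + 1))
        + (-(1 / (1 - RatFunc.X ^ n)))
        + ∑ i ∈ Finset.range (α - 1), (-1 : RatFunc ℚ) ^ (n - α + i + 1) * T (i + 1))
      - (-2 * ∑ i ∈ Finset.range α, gg i
        - 2 * ∑ m ∈ Finset.range h, RatFunc.X ^ (2 * m + 1) * (1 / (1 - RatFunc.X ^ (2 * m + 1)))
        - 1 / (1 - RatFunc.X ^ n)
        - ((h : ℕ) : RatFunc ℚ)
        + 1 / (1 - RatFunc.X ^ α))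
      = (∑ j ∈ Finset.range (2 * h), T (j + 1)) - ((h : ℕ) : RatFunc ℚ) := by
      rw [hchunk1, hchunk2, hSα, hOx, hsplitg, hsplitT]
      ring
    rw [hfin]
    exact pc_to_sub_zero (pc_sumT hnh')
  exact pc_trans hn (pc_of_eq hn step1) (pc_trans hn step2 (pc_trans hn step5
    (pc_symm (pc_trans hn (pc_of_eq hn step3) step4))))
end
end
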